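/- In the presented group G = ⟨β, γ | β⁵ = γ⁷ = (βγ)² = 1⟩, the image of b⁻² * c (i.e., the element β⁻²γ) is not the identity. -/
import Mathlib


/-- The generator `b` of the free group on two generators. -/
def b : FreeGroup (Fin 2) := FreeGroup.of 0

/-- The generator `c` of the free group on two generators. -/
def c : FreeGroup (Fin 2) := FreeGroup.of 1

/-- The relators `β⁵, γ⁷, (βγ)²` of the (7,5,2)-triangle-type presentation. -/
def rels : Set (FreeGroup (Fin 2)) := {b ^ 5, c ^ 7, (b * c) ^ 2}

/-- A 5-cycle in `Perm (Fin 7)`. -/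
def sigma : Equiv.Perm (Fin 7) := c[1, 6, 4, 3, 2]

/-- A 7-cycle in `Perm (Fin 7)`. -/
def tau : Equiv.Perm (Fin 7) := c[0, 1, 2, 3, 4, 5, 6]

def fgen : Fin 2 → Equiv.Perm (Fin 7) := ![sigma, tau]

set_option maxRecDepth 10000 in
lemma hrels : ∀ r ∈ rels, FreeGroup.lift fgen r = 1 := by
  intro r hr
  rcases hr with h | h | h <;> subst h <;>
    simp only [b, c, map_pow, map_mul, FreeGroup.lift_apply_of, fgen] <;> decide

/-- Proposition 2.1.1, group-theoretic content: in `G = ⟨β, γ ∣ β⁵ = γ⁷ = (βγ)² = 1⟩`,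
the element `β⁻²γ` (the image of the meridian class `x₅` of the Mazur link) is not the
identity. -/
theorem meridian_class_ne_one : PresentedGroup.mk rels (b ^ (-2 : ℤ) * c) ≠ 1 := by
  intro h
  have h2 := congrArg (PresentedGroup.toGroup hrels) h
  rw [map_one] at h2
  have h3 : PresentedGroup.toGroup hrels (PresentedGroup.mk rels (b ^ (-2 : ℤ) * c))
      = FreeGroup.lift fgen (b ^ (-2 : ℤ) * c) := rfl
  rw [h3] at h2
  simp only [b, c, map_mul, map_zpow, FreeGroup.lift_apply_of, fgen] at h2
  revert h2
  decide
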